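/- Let y ∈ ℝ^n minimize the sum-of-squared-distances function F and let z₁, …, z_N with zᵢ = gᵢ xᵢ (gᵢ ∈ G) satisfy ‖zᵢ − y‖ = D(xᵢ, y) for all i (an optimal multiple alignment). Then the sum of pairwise inner products is maximal over all choices of representatives: Σ_{i=1}^N Σ_{j=i+1}^N ⟨zᵢ, zⱼ⟩ ≥ Σ_{i=1}^N Σ_{j=i+1}^N ⟨zᵢ', zⱼ'⟩ for every choice zᵢ' = gᵢ' xᵢ with gᵢ' ∈ G. -/
import Mathlib


open scoped BigOperators RealInnerProductSpace

lemma aux_norm_sq_sum {E : Type*} [NormedAddCommGroup E] [InnerProductSpace ℝ E]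
    {ι : Type*} [Fintype ι] [LinearOrder ι] [LocallyFiniteOrderTop ι] [LocallyFiniteOrderBot ι]
    (v : ι → E) :
    ‖∑ i, v i‖ ^ 2 = ∑ i, ‖v i‖ ^ 2 + 2 * ∑ i, ∑ j ∈ Finset.Ioi i, ⟪v i, v j⟫ := by
  have expand : ‖∑ i, v i‖ ^ 2 = ∑ i, ∑ j, (⟪v i, v j⟫ : ℝ) := by
    rw [← real_inner_self_eq_norm_sq, sum_inner]
    exact Finset.sum_congr rfl fun i _ => inner_sum _ _ _
  have hoff := Finset.sum_sum_Ioi_add_eq_sum_sum_off_diag (fun a b => (⟪v b, v a⟫ : ℝ))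
  have hsplit : ∀ i, (∑ j, (⟪v i, v j⟫ : ℝ)) = ⟪v i, v i⟫ + ∑ j ∈ ({i}ᶜ : Finset ι), ⟪v i, v j⟫ := by
    intro i
    rw [← Finset.sum_compl_add_sum ({i} : Finset ι) (fun j => (⟪v i, v j⟫ : ℝ))]
    simp [add_comm]
  have h2 : (∑ i, ∑ j ∈ Finset.Ioi i, ((⟪v i, v j⟫ : ℝ) + ⟪v j, v i⟫))
      = 2 * ∑ i, ∑ j ∈ Finset.Ioi i, ⟪v i, v j⟫ := by
    rw [Finset.mul_sum]
    refine Finset.sum_congr rfl fun i _ => ?_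
    rw [Finset.mul_sum]
    refine Finset.sum_congr rfl fun j _ => ?_
    rw [real_inner_comm (v j) (v i), two_mul]
  calc ‖∑ i, v i‖ ^ 2 = ∑ i, ∑ j, (⟪v i, v j⟫ : ℝ) := expand
    _ = ∑ i, (⟪v i, v i⟫ + ∑ j ∈ ({i}ᶜ : Finset ι), (⟪v i, v j⟫ : ℝ)) :=
        Finset.sum_congr rfl fun i _ => hsplit i
    _ = ∑ i, ‖v i‖ ^ 2 + 2 * ∑ i, ∑ j ∈ Finset.Ioi i, ⟪v i, v j⟫ := by
        rw [Finset.sum_add_distrib, ← hoff, h2]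
        simp [real_inner_self_eq_norm_sq]

lemma aux_sum_norm_sub_sq {E : Type*} [NormedAddCommGroup E] [InnerProductSpace ℝ E]
    {N : ℕ} (v : Fin N → E) (c : E) :
    ∑ i, ‖v i - c‖ ^ 2
      = ∑ i, ‖v i‖ ^ 2 - 2 * ⟪∑ i, v i, c⟫ + (N : ℝ) * ‖c‖ ^ 2 := by
  have : ∀ i, ‖v i - c‖ ^ 2 = ‖v i‖ ^ 2 - 2 * ⟪v i, c⟫ + ‖c‖ ^ 2 := fun i =>
    norm_sub_sq_real (v i) c
  rw [Finset.sum_congr rfl fun i _ => this i]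
  rw [Finset.sum_add_distrib, Finset.sum_sub_distrib, sum_inner]
  simp [Finset.mul_sum, Finset.sum_const, mul_comm]

/-- The graph distance `D(x, y) = min_{g ∈ G} ‖g x − y‖` on `ℝ^n`, where `G` is a finite
subgroup of the group of linear isometries of `ℝ^n` (e.g. permutation matrices acting by
conjugation on vectorized graph attribute matrices). -/
noncomputable def grDist {n : ℕ}
    (G : Subgroup (EuclideanSpace ℝ (Fin n) ≃ₗᵢ[ℝ] EuclideanSpace ℝ (Fin n))) [Fintype G]
    (x y : EuclideanSpace ℝ (Fin n)) : ℝ :=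
  Finset.univ.inf' Finset.univ_nonempty fun g : G => ‖g.val x - y‖

lemma grDist_le {n : ℕ}
    (G : Subgroup (EuclideanSpace ℝ (Fin n) ≃ₗᵢ[ℝ] EuclideanSpace ℝ (Fin n))) [Fintype G]
    (x y : EuclideanSpace ℝ (Fin n)) (g : G) : grDist G x y ≤ ‖g.val x - y‖ :=
  Finset.inf'_le _ (Finset.mem_univ g)

lemma grDist_nonneg {n : ℕ}
    (G : Subgroup (EuclideanSpace ℝ (Fin n) ≃ₗᵢ[ℝ] EuclideanSpace ℝ (Fin n))) [Fintype G]
    (x y : EuclideanSpace ℝ (Fin n)) : 0 ≤ grDist G x y :=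
  Finset.le_inf' _ _ fun _ _ => norm_nonneg _

lemma norm_inv_apply_sub {n : ℕ}
    (G : Subgroup (EuclideanSpace ℝ (Fin n) ≃ₗᵢ[ℝ] EuclideanSpace ℝ (Fin n))) [Fintype G]
    (g : G) (a b : EuclideanSpace ℝ (Fin n)) :
    ‖(g⁻¹ : G).val a - b‖ = ‖g.val b - a‖ := by
  have h1 : (g⁻¹ : G).val = (g.val).symm := rfl
  rw [h1, ← (g.val).norm_map ((g.val).symm a - b), map_sub, LinearIsometryEquiv.apply_symm_apply,
    norm_sub_rev]

lemma grDist_symm {n : ℕ}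
    (G : Subgroup (EuclideanSpace ℝ (Fin n) ≃ₗᵢ[ℝ] EuclideanSpace ℝ (Fin n))) [Fintype G]
    (x y : EuclideanSpace ℝ (Fin n)) : grDist G x y = grDist G y x := by
  have key : ∀ a b : EuclideanSpace ℝ (Fin n), grDist G a b ≤ grDist G b a := by
    intro a b
    obtain ⟨g0, -, hg0⟩ := Finset.exists_mem_eq_inf' (Finset.univ_nonempty)
      (fun g : G => ‖g.val b - a‖)
    calc grDist G a b ≤ ‖(g0⁻¹ : G).val a - b‖ := grDist_le G a b g0⁻¹
      _ = ‖g0.val b - a‖ := norm_inv_apply_sub G g0 a b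
      _ = grDist G b a := (hg0).symm
  exact le_antisymm (key x y) (key y x)

/-- if `y` minimizes `F` and `zᵢ = gᵢ xᵢ` is an optimal multiple alignment
(`‖zᵢ − y‖ = D(xᵢ, y)` for all `i`), then the sum of pairwise inner products of the `zᵢ`
is maximal over all choices of representatives `zᵢ' = gᵢ' xᵢ`. -/
theorem optimal_alignment_maximizes_pairwise_inner {n : ℕ}
    (G : Subgroup (EuclideanSpace ℝ (Fin n) ≃ₗᵢ[ℝ] EuclideanSpace ℝ (Fin n))) [Fintype G]
    (N : ℕ) (x : Fin N → EuclideanSpace ℝ (Fin n))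
    (y : EuclideanSpace ℝ (Fin n))
    (hmin : ∀ z : EuclideanSpace ℝ (Fin n),
      (1 / 2 : ℝ) * ∑ i, grDist G y (x i) ^ 2 ≤ (1 / 2 : ℝ) * ∑ i, grDist G z (x i) ^ 2)
    (g : Fin N → G)
    (halign : ∀ i, ‖(g i).val (x i) - y‖ = grDist G (x i) y) :
    ∀ g' : Fin N → G,
      (∑ i, ∑ j ∈ Finset.Ioi i, ⟪(g' i).val (x i), (g' j).val (x j)⟫) ≤
        ∑ i, ∑ j ∈ Finset.Ioi i, ⟪(g i).val (x i), (g j).val (x j)⟫ := by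
  intro g'
  rcases Nat.eq_zero_or_pos N with hN | hN
  · subst hN; simp
  have hNpos : (0 : ℝ) < N := by exact_mod_cast hN
  set z : Fin N → EuclideanSpace ℝ (Fin n) := fun i => (g i).val (x i) with hz
  set z' : Fin N → EuclideanSpace ℝ (Fin n) := fun i => (g' i).val (x i) with hz'
  set s := ∑ i, z i with hs
  set s' := ∑ i, z' i with hs'
  set A := ∑ i, ‖x i‖ ^ 2 with hA
  have hnz : ∀ i, ‖z i‖ = ‖x i‖ := fun i => (g i).val.norm_map _
  have hnz' : ∀ i, ‖z' i‖ = ‖x i‖ := fun i => (g' i).val.norm_map _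
  have hAz : ∑ i, ‖z i‖ ^ 2 = A := Finset.sum_congr rfl fun i _ => by rw [hnz i]
  have hAz' : ∑ i, ‖z' i‖ ^ 2 = A := Finset.sum_congr rfl fun i _ => by rw [hnz' i]
  -- the grDist of y to x i equals ‖z i − y‖
  have hzy : ∀ i, grDist G y (x i) = ‖z i - y‖ := fun i => by
    rw [grDist_symm, ← halign i]
  -- upper bound for grDist at any point via the representatives z'
  set m : EuclideanSpace ℝ (Fin n) := (N : ℝ)⁻¹ • s' with hm
  have hub : ∀ i, grDist G m (x i) ≤ ‖z' i - m‖ := by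
    intro i
    calc grDist G m (x i) ≤ ‖((g' i)⁻¹ : G).val m - x i‖ := grDist_le G m (x i) (g' i)⁻¹
      _ = ‖(g' i).val (x i) - m‖ := norm_inv_apply_sub G (g' i) m (x i)
      _ = ‖z' i - m‖ := rfl
  -- main chain of inequalities
  have h1 : ∑ i, ‖z i - y‖ ^ 2 ≤ ∑ i, ‖z' i - m‖ ^ 2 := by
    have ha : ∑ i, ‖z i - y‖ ^ 2 = ∑ i, grDist G y (x i) ^ 2 :=
      Finset.sum_congr rfl fun i _ => by rw [hzy i]
    have hb : ∑ i, grDist G y (x i) ^ 2 ≤ ∑ i, grDist G m (x i) ^ 2 := by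
      have := hmin m; linarith
    have hc : ∑ i, grDist G m (x i) ^ 2 ≤ ∑ i, ‖z' i - m‖ ^ 2 :=
      Finset.sum_le_sum fun i _ => pow_le_pow_left₀ (grDist_nonneg G m (x i)) (hub i) 2
    linarith
  -- expansions
  have e1 : ∑ i, ‖z i - y‖ ^ 2 = A - 2 * ⟪s, y⟫ + (N : ℝ) * ‖y‖ ^ 2 := by
    rw [aux_sum_norm_sub_sq, hAz]
  have e2 : ∑ i, ‖z' i - m‖ ^ 2 = A - (N : ℝ)⁻¹ * ‖s'‖ ^ 2 := by
    rw [aux_sum_norm_sub_sq, hAz']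
    have hip : (⟪s', m⟫ : ℝ) = (N : ℝ)⁻¹ * ‖s'‖ ^ 2 := by
      rw [hm, real_inner_smul_right, real_inner_self_eq_norm_sq]
    have hnm : ‖m‖ ^ 2 = (N : ℝ)⁻¹ ^ 2 * ‖s'‖ ^ 2 := by
      rw [hm, norm_smul]
      simp [mul_pow, abs_of_nonneg (le_of_lt (inv_pos.mpr hNpos))]
    rw [hip, hnm]
    field_simp
    ring
  -- lower bound via nonnegativity of ‖s − N • y‖²
  have e3 : A - (N : ℝ)⁻¹ * ‖s‖ ^ 2 ≤ ∑ i, ‖z i - y‖ ^ 2 := by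
    rw [e1]
    have h0 : (0 : ℝ) ≤ ‖s - (N : ℝ) • y‖ ^ 2 := sq_nonneg _
    have hexp : ‖s - (N : ℝ) • y‖ ^ 2
        = ‖s‖ ^ 2 - 2 * ((N : ℝ) * ⟪s, y⟫) + (N : ℝ) ^ 2 * ‖y‖ ^ 2 := by
      rw [norm_sub_sq_real, real_inner_smul_right, norm_smul]
      simp [mul_pow, abs_of_nonneg (le_of_lt hNpos)]
    rw [hexp] at h0
    have hNne : (N : ℝ) ≠ 0 := ne_of_gt hNpos
    have hinv : (N : ℝ)⁻¹ * N = 1 := inv_mul_cancel₀ hNne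
    have hinvpos : (0 : ℝ) < (N : ℝ)⁻¹ := inv_pos.mpr hNpos
    nlinarith [mul_nonneg (le_of_lt hinvpos) h0]
  -- conclude ‖s'‖² ≤ ‖s‖²
  have hss : ‖s'‖ ^ 2 ≤ ‖s‖ ^ 2 := by
    have : A - (N : ℝ)⁻¹ * ‖s‖ ^ 2 ≤ A - (N : ℝ)⁻¹ * ‖s'‖ ^ 2 := by
      calc A - (N : ℝ)⁻¹ * ‖s‖ ^ 2 ≤ ∑ i, ‖z i - y‖ ^ 2 := e3
        _ ≤ ∑ i, ‖z' i - m‖ ^ 2 := h1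
        _ = A - (N : ℝ)⁻¹ * ‖s'‖ ^ 2 := e2
    have hinv : (0 : ℝ) < (N : ℝ)⁻¹ := inv_pos.mpr hNpos
    nlinarith
  -- translate to pairwise inner products
  have q1 : ‖s‖ ^ 2 = A + 2 * ∑ i, ∑ j ∈ Finset.Ioi i, ⟪z i, z j⟫ := by
    rw [hs, aux_norm_sq_sum, hAz]
  have q2 : ‖s'‖ ^ 2 = A + 2 * ∑ i, ∑ j ∈ Finset.Ioi i, ⟪z' i, z' j⟫ := by
    rw [hs', aux_norm_sq_sum, hAz']
  have : (∑ i, ∑ j ∈ Finset.Ioi i, ⟪z' i, z' j⟫ : ℝ) ≤ ∑ i, ∑ j ∈ Finset.Ioi i, ⟪z i, z j⟫ := by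
    rw [q1, q2] at hss; linarith
  exact this
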